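/- arXiv:2109.05155 — 4 statements merged into one kernel-verified Lean document; each statement's English description precedes it below -/
import Mathlib

section
/- The propensity score is a balancing score: if p(X) = P(D=1 | X) for binary D, then D ⊥ X | p(X), i.e., P(D=1 | X, p(X)) = P(D=1 | p(X)) = p(X) almost surely. -/
/-!
Since `e` is `σ(X)`-measurable, `σ(e) ≤ σ(X)`. For a `{0,1}`-valued `D` the indicator of every
event `{D ∈ s}` is an affine function `a + b D`, so `P(D ∈ s | X) = a + b e` is already
`σ(e)`-measurable. By the tower property and pulling out `σ(e)`-measurable factors, for every
`B ∈ σ(X)` we get `P(D ∈ s, B | e) = E[1_B P(D ∈ s | X) | e] = P(D ∈ s | e) P(B | e)`.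
-/

open MeasureTheory ProbabilityTheory Filter

namespace MeasureTheory

variable {Ω : Type*} {m m' mΩ : MeasurableSpace Ω} {μ : Measure Ω} [IsFiniteMeasure μ]

theorem condExp_ae_eq_condExp_of_le_of_aestronglyMeasurable {E : Type*} [NormedAddCommGroup E]
    [NormedSpace ℝ E] [CompleteSpace E] (hmm' : m ≤ m') (hm' : m' ≤ mΩ) {f : Ω → E}
    (hfm : AEStronglyMeasurable[m] (μ[f | m']) μ) : μ[f | m] =ᵐ[μ] μ[f | m'] :=
  (condExp_condExp_of_le hmm' hm').symm.trans
    (condExp_of_aestronglyMeasurable' (hmm'.trans hm') hfm integrable_condExp)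

theorem condExp_indicator_ae_eq_mul_of_aestronglyMeasurable (hmm' : m ≤ m') (hm' : m' ≤ mΩ)
    {f : Ω → ℝ} (hf : Integrable f μ) (hfm : AEStronglyMeasurable[m] (μ[f | m']) μ)
    {B : Set Ω} (hB : MeasurableSet[m'] B) :
    μ[B.indicator f | m] =ᵐ[μ] μ⟦B | m⟧ * μ[f | m] := by
  have hind : B.indicator 1 * μ[f | m'] = B.indicator (μ[f | m']) := by
    ext ω; by_cases hω : ω ∈ B <;> simp [hω]
  calc μ[B.indicator f | m]
      =ᵐ[μ] μ[μ[B.indicator f | m'] | m] := (condExp_condExp_of_le hmm' hm').symm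
    _ =ᵐ[μ] μ[B.indicator 1 * μ[f | m'] | m] :=
      hind ▸ condExp_congr_ae (condExp_indicator hf hB)
    _ =ᵐ[μ] μ⟦B | m⟧ * μ[f | m'] :=
      condExp_mul_of_aestronglyMeasurable_right hfm
        (hind ▸ integrable_condExp.indicator (hm' B hB))
        ((integrable_const 1).indicator (hm' B hB))
    _ =ᵐ[μ] μ⟦B | m⟧ * μ[f | m] :=
      (condExp_ae_eq_condExp_of_le_of_aestronglyMeasurable hmm' hm' hfm).symm.mul_left

theorem condExp_comp_ae_eq_of_forall_eq_zero_or_eq_one (hm : m ≤ mΩ) {D : Ω → ℝ}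
    (hD : Integrable D μ) (hDbin : ∀ ω, D ω = 0 ∨ D ω = 1) (φ : ℝ → ℝ) :
    μ[φ ∘ D | m] =ᵐ[μ] fun ω ↦ φ 0 + (φ 1 - φ 0) * μ[D | m] ω := by
  have hφ : φ ∘ D = (fun _ ↦ φ 0) + (φ 1 - φ 0) • D := by
    ext ω; rcases hDbin ω with h | h <;> simp [h]
  rw [hφ]
  filter_upwards [condExp_add (integrable_const _) (hD.smul (φ 1 - φ 0)) m,
    condExp_smul (φ 1 - φ 0) D m] with ω hadd hsmul
  rw [hadd, Pi.add_apply, hsmul, condExp_const hm, Pi.smul_apply, smul_eq_mul]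

end MeasureTheory

namespace ProbabilityTheory

variable {Ω β β' : Type*} {m mΩ : MeasurableSpace Ω} [StandardBorelSpace Ω] {μ : Measure Ω}
  [IsFiniteMeasure μ] [MeasurableSpace β] [MeasurableSpace β']

theorem condIndepFun_of_aestronglyMeasurable_condExp_preimage {f : Ω → β} {g : Ω → β'}
    (hf : Measurable f) (hg : Measurable g) (hm : m ≤ mΩ)
    (hmg : m ≤ MeasurableSpace.comap g inferInstance)
    (h : ∀ s, MeasurableSet s →
      AEStronglyMeasurable[m] (μ⟦f ⁻¹' s | MeasurableSpace.comap g inferInstance⟧) μ) :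
    CondIndepFun m hm f g μ := by
  rw [condIndepFun_iff_condExp_inter_preimage_eq_mul hf hg]
  intro s t hs ht
  rw [Set.inter_comm, ← Set.indicator_indicator]
  filter_upwards [condExp_indicator_ae_eq_mul_of_aestronglyMeasurable hmg hg.comap_le
    ((integrable_const 1).indicator (hf hs)) (h s hs) ⟨t, ht, rfl⟩] with ω hω
  rw [hω, Pi.mul_apply, mul_comm]

end ProbabilityTheory

/-- The propensity score is a balancing score: `D ⊥ X | p(X)`, and
`P(D = 1 | p(X)) = p(X)` a.s. -/
theorem propensity_is_balancing
    {Ω : Type*} [MeasurableSpace Ω] [StandardBorelSpace Ω]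
    (μ : Measure Ω) [IsProbabilityMeasure μ]
    {p : ℕ} (X : Ω → (Fin p → ℝ)) (D : Ω → ℝ)
    (hX : Measurable X) (hD : Measurable D)
    (hDbin : ∀ ω, D ω = 0 ∨ D ω = 1)
    (e : Ω → ℝ) (he_meas : Measurable e)
    (he_measX : Measurable[MeasurableSpace.comap X inferInstance] e)
    (he : e =ᵐ[μ] (μ[D | MeasurableSpace.comap X inferInstance])) :
    CondIndepFun (MeasurableSpace.comap e inferInstance) he_meas.comap_le D X μ ∧
      (μ[D | MeasurableSpace.comap e inferInstance]) =ᵐ[μ] e := by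
  have hDi : Integrable D μ := .of_bound hD.aestronglyMeasurable 1 <|
    ae_of_all _ fun ω ↦ by rcases hDbin ω with h | h <;> simp [h]
  have he_strong : StronglyMeasurable[MeasurableSpace.comap e inferInstance] e :=
    (comap_measurable e).stronglyMeasurable
  have hcond (φ : ℝ → ℝ) : AEStronglyMeasurable[MeasurableSpace.comap e inferInstance]
      (μ[φ ∘ D | MeasurableSpace.comap X inferInstance]) μ := by
    have h_affine : StronglyMeasurable[MeasurableSpace.comap e inferInstance]
        fun ω ↦ φ 0 + (φ 1 - φ 0) * e ω :=
      stronglyMeasurable_const.add (stronglyMeasurable_const.mul he_strong)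
    refine h_affine.aestronglyMeasurable.congr ?_
    filter_upwards [condExp_comp_ae_eq_of_forall_eq_zero_or_eq_one hX.comap_le hDi hDbin φ, he]
      with ω hφ hω
    rw [hφ, ← hω]
  refine ⟨condIndepFun_of_aestronglyMeasurable_condExp_preimage hD hX _ he_measX.comap_le
    fun s _ ↦ hcond (s.indicator 1), ?_⟩
  exact (condExp_ae_eq_condExp_of_le_of_aestronglyMeasurable he_measX.comap_le hX.comap_le
    (he_strong.aestronglyMeasurable.congr he)).trans he.symm
end

section
/- If unconfoundedness (Y^T, Y^C) ⊥ D | X holds and p(X) = P(D=1|X), then unconfoundedness given the propensity score holds: (Y^T, Y^C) ⊥ D | p(X). -/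
/-!
Since `D` is binary, `σ(D)` is generated by the single event `B = {D = 1}`, so it suffices to
factor `P(A ∩ B | e)` for `A ∈ σ(Y)`. Because `σ(e) ⊆ σ(X)`, the tower property and
unconfoundedness give `P(A ∩ B | e) = E[P(A | X) P(B | X) | e]`, and `P(B | X) = e` is
`σ(e)`-measurable, so it pulls out: `P(A ∩ B | e) = e · P(A | e)`, while `P(B | e) = e` too.
-/

open MeasureTheory ProbabilityTheory MeasurableSpace

lemma condExp_inter_ae_eq_mul_of_le {Ω : Type*} {m m' mΩ : MeasurableSpace Ω} {μ : Measure Ω}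
    [IsFiniteMeasure μ] (hm' : m' ≤ m) (hm : m ≤ mΩ) {A B : Set Ω}
    (hB : AEStronglyMeasurable[m'] (μ⟦B | m⟧) μ)
    (h : μ⟦A ∩ B | m⟧ =ᵐ[μ] μ⟦A | m⟧ * μ⟦B | m⟧) :
    μ⟦A ∩ B | m'⟧ =ᵐ[μ] μ⟦A | m'⟧ * μ⟦B | m'⟧ := by
  have hB' : μ⟦B | m'⟧ =ᵐ[μ] μ⟦B | m⟧ :=
    (condExp_condExp_of_le hm' hm).symm.trans
      (condExp_of_aestronglyMeasurable' (hm'.trans hm) hB integrable_condExp)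
  have h' : μ⟦A ∩ B | m⟧ =ᵐ[μ] μ⟦B | m⟧ * μ⟦A | m⟧ :=
    h.trans (.of_eq (mul_comm _ _))
  calc μ⟦A ∩ B | m'⟧
      =ᵐ[μ] μ[μ⟦A ∩ B | m⟧ | m'] :=
      (condExp_condExp_of_le (f := (A ∩ B).indicator fun _ ↦ (1 : ℝ)) hm' hm).symm
    _ =ᵐ[μ] μ[μ⟦B | m⟧ * μ⟦A | m⟧ | m'] := condExp_congr_ae h'
    _ =ᵐ[μ] μ⟦B | m⟧ * μ[μ⟦A | m⟧ | m'] :=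
      condExp_mul_of_aestronglyMeasurable_left hB (integrable_condExp.congr h') integrable_condExp
    _ =ᵐ[μ] μ⟦A | m'⟧ * μ⟦B | m'⟧ := by
      filter_upwards [hB', condExp_condExp_of_le (f := A.indicator fun _ ↦ (1 : ℝ)) hm' hm]
        with ω hBω hAω
      simp only [Pi.mul_apply, hBω, hAω, mul_comm]

theorem ProbabilityTheory.CondIndep.of_le_of_aestronglyMeasurable_condExp {Ω : Type*}
    {m m' m₁ mΩ : MeasurableSpace Ω} [StandardBorelSpace Ω]
    {μ : Measure Ω} [IsFiniteMeasure μ]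
    (hm : m ≤ mΩ) (hm' : m' ≤ m) (hm₁ : m₁ ≤ mΩ) {B : Set Ω} (hB : MeasurableSet B)
    (hprop : AEStronglyMeasurable[m'] (μ⟦B | m⟧) μ)
    (h : CondIndep m m₁ (generateFrom {B}) hm μ) :
    CondIndep m' m₁ (generateFrom {B}) (hm'.trans hm) μ := by
  refine CondIndepSets.condIndep hm₁ (generateFrom_singleton_le hB)
    (fun _ hs _ ht _ ↦ hs.inter ht) (IsPiSystem.singleton B)
    (@generateFrom_measurableSet Ω m₁).symm rfl ?_
  rw [condIndepSets_iff _ _ {s | MeasurableSet[m₁] s} {B} (fun s hs ↦ hm₁ s hs) (by simpa) μ]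
  intro A C hA hC
  rw [Set.mem_singleton_iff.1 hC]
  exact condExp_inter_ae_eq_mul_of_le hm' hm hprop
    ((condIndep_iff _ _ _ hm hm₁ (generateFrom_singleton_le hB) μ).1 h A B hA
      (measurableSet_generateFrom rfl))

/-- Unconfoundedness given `X` implies unconfoundedness given the propensity
score `p(X)`. -/
theorem unconfoundedness_given_propensity
    {Ω : Type*} [MeasurableSpace Ω] [StandardBorelSpace Ω]
    (μ : Measure Ω) [IsProbabilityMeasure μ]
    {p : ℕ} (X : Ω → (Fin p → ℝ)) (D YT YC : Ω → ℝ)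
    (hX : Measurable X) (hD : Measurable D) (hYT : Measurable YT) (hYC : Measurable YC)
    (hDbin : ∀ ω, D ω = 0 ∨ D ω = 1)
    (e : Ω → ℝ) (he_meas : Measurable e)
    (he_measX : Measurable[MeasurableSpace.comap X inferInstance] e)
    (he : e =ᵐ[μ] (μ[D | MeasurableSpace.comap X inferInstance]))
    (huncf : CondIndepFun (MeasurableSpace.comap X inferInstance) hX.comap_le
      (fun ω => (YT ω, YC ω)) D μ) :
    CondIndepFun (MeasurableSpace.comap e inferInstance) he_meas.comap_le
      (fun ω => (YT ω, YC ω)) D μ := by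
  set Y := fun ω ↦ (YT ω, YC ω)
  set B := D ⁻¹' {1}
  have hDB : D = B.indicator fun _ ↦ 1 := by
    ext ω
    rcases hDbin ω with h | h <;> simp [B, h]
  have hσD : MeasurableSpace.comap D inferInstance = generateFrom {B} :=
    le_antisymm (hDB ▸ comap_indicator_const_le_generateFrom_singleton B 1)
      (generateFrom_singleton_le ⟨{1}, measurableSet_singleton 1, rfl⟩)
  have hprop : AEStronglyMeasurable[MeasurableSpace.comap e inferInstance]
      (μ⟦B | MeasurableSpace.comap X inferInstance⟧) μ :=
    ⟨e, (comap_measurable e).stronglyMeasurable, by rw [← hDB]; exact he.symm⟩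
  have hindep : CondIndep (MeasurableSpace.comap X inferInstance)
      (MeasurableSpace.comap Y inferInstance) (generateFrom {B}) hX.comap_le μ := by
    rw [← hσD]; exact huncf
  show CondIndep _ (MeasurableSpace.comap Y inferInstance)
    (MeasurableSpace.comap D inferInstance) _ μ
  rw [hσD]
  exact hindep.of_le_of_aestronglyMeasurable_condExp hX.comap_le he_measX.comap_le
    (hYT.prodMk hYC).comap_le (hD (measurableSet_singleton 1)) hprop
end

section
/- Let b be a measurable function of X such that D ⊥ X | b(X). If (Y^T, Y^C) ⊥ D | X, then (Y^T, Y^C) ⊥ D | b(X). That is, every balancing score preserves unconfoundedness. -/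
/-!
Write `F = σ(X)` and `G = σ(b(X)) ≤ F`. For any event `A`, conditional independence of `A` and `F`
given `G` says that `P(A | F) = P(A | G)`: both have the same integral over every `F`-set. Applying
this to `A = {D ∈ t}`, unconfoundedness given `F` reads
`P(Y ∈ s, D ∈ t | F) = P(Y ∈ s | F) · P(D ∈ t | G)`, and conditioning on `G` (tower property,
pulling out the `G`-measurable factor) gives `P(Y ∈ s, D ∈ t | G) = P(Y ∈ s | G) · P(D ∈ t | G)`.
-/

open MeasureTheory ProbabilityTheory Filter

section CondExpIndicator

variable {Ω : Type*} {m₁ m₂ mΩ : MeasurableSpace Ω} {μ : Measure Ω}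

lemma norm_condExp_indicator_le_one (s : Set Ω) : ∀ᵐ ω ∂μ, ‖(μ⟦s | m₁⟧) ω‖ ≤ 1 := by
  simpa [Real.norm_eq_abs] using ae_bdd_abs_condExp_of_ae_bdd_abs (m := m₁) (μ := μ) (R := 1)
    (ae_of_all _ fun ω => by by_cases h : ω ∈ s <;> simp [h])

variable [IsFiniteMeasure μ]

lemma setIntegral_eq_integral_mul_condExp_indicator (hm₁ : m₁ ≤ mΩ) {g : Ω → ℝ}
    (hg : StronglyMeasurable[m₁] g) (hg_bound : ∀ᵐ ω ∂μ, ‖g ω‖ ≤ 1)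
    {s : Set Ω} (hs : MeasurableSet s) :
    ∫ ω in s, g ω ∂μ = ∫ ω, (g * (μ⟦s | m₁⟧)) ω ∂μ := by
  have hgs : s.indicator g = g * s.indicator fun _ => (1 : ℝ) := by
    funext ω; by_cases h : ω ∈ s <;> simp [h]
  rw [← integral_indicator hs, hgs, ← integral_condExp hm₁]
  exact integral_congr_ae (condExp_stronglyMeasurable_mul_of_bound hm₁ hg
    ((integrable_const 1).indicator hs) 1 hg_bound)

lemma condExp_indicator_eq_of_forall_condExp_inter_eq_mul (hm₁₂ : m₁ ≤ m₂) (hm₂ : m₂ ≤ mΩ)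
    {A : Set Ω} (hA : MeasurableSet A)
    (h : ∀ s, MeasurableSet[m₂] s → (μ⟦A ∩ s | m₁⟧) =ᵐ[μ] (μ⟦A | m₁⟧) * (μ⟦s | m₁⟧)) :
    (μ⟦A | m₂⟧) =ᵐ[μ] (μ⟦A | m₁⟧) := by
  have hm₁ : m₁ ≤ mΩ := hm₁₂.trans hm₂
  refine (ae_eq_condExp_of_forall_setIntegral_eq hm₂ ((integrable_const 1).indicator hA)
    (fun _ _ _ => integrable_condExp.integrableOn) (fun s hs _ => ?_)
    (stronglyMeasurable_condExp.mono hm₁₂).aestronglyMeasurable).symm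
  calc ∫ ω in s, (μ⟦A | m₁⟧) ω ∂μ
      = ∫ ω, ((μ⟦A | m₁⟧) * (μ⟦s | m₁⟧)) ω ∂μ :=
        setIntegral_eq_integral_mul_condExp_indicator hm₁ stronglyMeasurable_condExp
          (norm_condExp_indicator_le_one A) (hm₂ s hs)
    _ = ∫ ω, (μ⟦A ∩ s | m₁⟧) ω ∂μ := (integral_congr_ae (h s hs)).symm
    _ = ∫ ω in s, A.indicator (fun _ => (1 : ℝ)) ω ∂μ := by
        rw [integral_condExp hm₁, Set.inter_comm, ← Set.indicator_indicator,
          integral_indicator (hm₂ s hs)]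

lemma condExp_inter_eq_mul_of_condExp_indicator_eq (hm₁₂ : m₁ ≤ m₂) (hm₂ : m₂ ≤ mΩ)
    {A B : Set Ω} (hA : (μ⟦A | m₂⟧) =ᵐ[μ] (μ⟦A | m₁⟧))
    (hBA : (μ⟦B ∩ A | m₂⟧) =ᵐ[μ] (μ⟦B | m₂⟧) * (μ⟦A | m₂⟧)) :
    (μ⟦B ∩ A | m₁⟧) =ᵐ[μ] (μ⟦B | m₁⟧) * (μ⟦A | m₁⟧) := by
  have hBA₁ : (μ⟦B ∩ A | m₂⟧) =ᵐ[μ] (μ⟦A | m₁⟧) * (μ⟦B | m₂⟧) := by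
    filter_upwards [hBA, hA] with ω hBAω hAω
    simp only [hBAω, Pi.mul_apply, hAω, mul_comm]
  calc (μ⟦B ∩ A | m₁⟧)
      =ᵐ[μ] μ[(μ⟦B ∩ A | m₂⟧) | m₁] := (condExp_condExp_of_le hm₁₂ hm₂).symm
    _ =ᵐ[μ] μ[(μ⟦A | m₁⟧) * (μ⟦B | m₂⟧) | m₁] := condExp_congr_ae hBA₁
    _ =ᵐ[μ] (μ⟦A | m₁⟧) * μ[(μ⟦B | m₂⟧) | m₁] :=
        condExp_stronglyMeasurable_mul_of_bound (hm₁₂.trans hm₂) stronglyMeasurable_condExp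
          integrable_condExp 1 (norm_condExp_indicator_le_one A)
    _ =ᵐ[μ] (μ⟦A | m₁⟧) * (μ⟦B | m₁⟧) :=
        (EventuallyEq.refl _ _).mul (condExp_condExp_of_le hm₁₂ hm₂)
    _ = (μ⟦B | m₁⟧) * (μ⟦A | m₁⟧) := mul_comm _ _

end CondExpIndicator

theorem balancing_score_unconfoundedness_general
    {Ω : Type*} [MeasurableSpace Ω] [StandardBorelSpace Ω]
    (μ : Measure Ω) [IsProbabilityMeasure μ]
    {p k : ℕ} (X : Ω → (Fin p → ℝ)) (D YT YC : Ω → ℝ)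
    (hX : Measurable X) (hD : Measurable D) (hYT : Measurable YT) (hYC : Measurable YC)
    (b : (Fin p → ℝ) → (Fin k → ℝ)) (hb : Measurable b)
    (hbal : CondIndepFun (MeasurableSpace.comap (b ∘ X) inferInstance)
      ((hb.comp hX).comap_le) D X μ)
    (huncf : CondIndepFun (MeasurableSpace.comap X inferInstance) hX.comap_le
      (fun ω => (YT ω, YC ω)) D μ) :
    CondIndepFun (MeasurableSpace.comap (b ∘ X) inferInstance)
      ((hb.comp hX).comap_le) (fun ω => (YT ω, YC ω)) D μ := by
  have hY : Measurable (fun ω => (YT ω, YC ω)) := hYT.prodMk hYC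
  have hbX : MeasurableSpace.comap (b ∘ X) inferInstance ≤
      MeasurableSpace.comap X inferInstance := by
    rw [← MeasurableSpace.comap_comp]
    exact MeasurableSpace.comap_mono hb.comap_le
  rw [condIndepFun_iff_condExp_inter_preimage_eq_mul hY hD]
  intro s t hs ht
  refine condExp_inter_eq_mul_of_condExp_indicator_eq hbX hX.comap_le ?_
    ((condIndepFun_iff_condExp_inter_preimage_eq_mul hY hD).mp huncf s t hs ht)
  refine condExp_indicator_eq_of_forall_condExp_inter_eq_mul hbX hX.comap_le (hD ht) ?_
  rintro _ ⟨u, hu, rfl⟩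
  exact (condIndepFun_iff_condExp_inter_preimage_eq_mul hD hX).mp hbal t u ht hu

/-- Every balancing score preserves unconfoundedness: if `D ⊥ X | b(X)` and
`(Y^T, Y^C) ⊥ D | X`, then `(Y^T, Y^C) ⊥ D | b(X)`. -/
theorem balancing_score_unconfoundedness
    {Ω : Type*} [MeasurableSpace Ω] [StandardBorelSpace Ω]
    (μ : Measure Ω) [IsProbabilityMeasure μ]
    {p k : ℕ} (X : Ω → (Fin p → ℝ)) (D YT YC : Ω → ℝ)
    (hX : Measurable X) (hD : Measurable D) (hYT : Measurable YT) (hYC : Measurable YC)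
    (hDbin : ∀ ω, D ω = 0 ∨ D ω = 1)
    (b : (Fin p → ℝ) → (Fin k → ℝ)) (hb : Measurable b)
    (hbal : CondIndepFun (MeasurableSpace.comap (b ∘ X) inferInstance)
      ((hb.comp hX).comap_le) D X μ)
    (huncf : CondIndepFun (MeasurableSpace.comap X inferInstance) hX.comap_le
      (fun ω => (YT ω, YC ω)) D μ) :
    CondIndepFun (MeasurableSpace.comap (b ∘ X) inferInstance)
      ((hb.comp hX).comap_le) (fun ω => (YT ω, YC ω)) D μ :=
  balancing_score_unconfoundedness_general μ X D YT YC hX hD hYT hYC b hb hbal huncf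
end

section
/- Let Z_n be random convex functions on ℝ^d converging pointwise in probability to a deterministic strictly convex function Z with a unique minimizer z*. Then any sequence of minimizers ẑ_n of Z_n converges in probability to z*. (Convexity lemma / epi-convergence argument used in lasso asymptotics.) -/
/-!
Convexity turns closeness at finitely many points into a uniform lower bound on a compact set:
for a convex `f` and a point `u` near `v`, `f u ≥ 2 f v - f (2 • v - u)`, and `2 • v - u` lies in a
small simplex around `v`, where `f` is bounded by its values at the vertices. On the sphere of
radius `ε` about `z*`, `Z` exceeds `Z z*` by a margin; so, off an event bounded by finitely many
pointwise deviations `|Zₙ p - Z p| > η`, also `Zₙ > Zₙ z*` on that sphere, and convexity along the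
segment from `z*` keeps every minimizer of `Zₙ` inside the ball.
-/

open MeasureTheory Filter Topology Set Metric

section ConvexApproximation

variable {E : Type*} [NormedAddCommGroup E] [NormedSpace ℝ E] [FiniteDimensional ℝ E]

theorem exists_finset_nhds_convexOn_lower_bound {Z : E → ℝ} {v : E} (hZ : ContinuousAt Z v)
    {η : ℝ} (hη : 0 < η) :
    ∃ F : Finset E, ∃ U ∈ 𝓝 v, ∀ f : E → ℝ, ConvexOn ℝ univ f →
      (∀ p ∈ F, |f p - Z p| ≤ η) → ∀ u ∈ U, Z u - 5 * η ≤ f u := by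
  classical
  have hN : {y | |Z y - Z v| ≤ η} ∈ 𝓝 v := by
    filter_upwards [hZ.eventually (closedBall_mem_nhds (Z v) hη)] with y hy
    rwa [Real.dist_eq] at hy
  obtain ⟨b, hvb, hbN⟩ := exists_mem_interior_convexHull_affineBasis hN
  have hreflect : Tendsto (fun u : E => (2 : ℝ) • v - u) (𝓝 v) (𝓝 v) :=
    (continuous_const.sub continuous_id).tendsto' v v (by simp [two_smul])
  refine ⟨insert v (Finset.univ.image b), _,
    inter_mem (hreflect (mem_interior_iff_mem_nhds.mp hvb)) hN, ?_⟩
  rintro f hf hfZ u ⟨hw, hu⟩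
  obtain ⟨_, ⟨i, rfl⟩, hfw⟩ := hf.exists_ge_of_mem_convexHull (subset_univ _) hw
  have hmid : f v ≤ (1 / 2 : ℝ) * f u + (1 / 2 : ℝ) * f ((2 : ℝ) • v - u) := by
    have h := hf.2 (mem_univ u) (mem_univ ((2 : ℝ) • v - u)) (by norm_num : (0 : ℝ) ≤ 1 / 2)
      (by norm_num : (0 : ℝ) ≤ 1 / 2) (by norm_num)
    rwa [show (1 / 2 : ℝ) • u + (1 / 2 : ℝ) • ((2 : ℝ) • v - u) = v by module] at h
  have hv := abs_le.mp (hfZ v (Finset.mem_insert_self _ _))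
  have hb := abs_le.mp (hfZ (b i) (by simp))
  have hbv := abs_le.mp (show |Z (b i) - Z v| ≤ η from hbN (subset_convexHull ℝ _ ⟨i, rfl⟩))
  have huv := abs_le.mp (show |Z u - Z v| ≤ η from hu)
  linarith

theorem IsCompact.exists_finset_convexOn_lower_bound {K : Set E} (hK : IsCompact K)
    {Z : E → ℝ} (hZ : ∀ x ∈ K, ContinuousAt Z x) {η : ℝ} (hη : 0 < η) :
    ∃ F : Finset E, ∀ f : E → ℝ, ConvexOn ℝ univ f →
      (∀ p ∈ F, |f p - Z p| ≤ η) → ∀ u ∈ K, Z u - 5 * η ≤ f u := by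
  classical
  choose F U hU hbound using fun x (hx : x ∈ K) =>
    exists_finset_nhds_convexOn_lower_bound (hZ x hx) hη
  obtain ⟨t, htK⟩ := hK.elim_nhds_subcover' U hU
  refine ⟨t.biUnion fun x => F x x.2, fun f hf hfZ u hu => ?_⟩
  obtain ⟨x, hxt, hux⟩ := mem_iUnion₂.mp (htK hu)
  exact hbound x x.2 f hf (fun p hp => hfZ p (Finset.mem_biUnion.mpr ⟨x, hxt, hp⟩)) u hux

theorem exists_finset_convexOn_dist_le_of_le {Z : E → ℝ} (hZ : Continuous Z) {x₀ : E} {ε : ℝ}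
    (hε : 0 ≤ ε) (hsep : ∀ u ∈ sphere x₀ ε, Z x₀ < Z u) :
    ∃ F : Finset E, ∃ η > 0, ∀ f : E → ℝ, ConvexOn ℝ univ f →
      (∀ p ∈ F, |f p - Z p| ≤ η) → ∀ x, f x ≤ f x₀ → dist x x₀ ≤ ε := by
  classical
  obtain ⟨a, hxa, ha⟩ := (isCompact_sphere x₀ ε).exists_forall_le' hZ.continuousOn hsep
  have hη : 0 < (a - Z x₀) / 7 := by linarith
  obtain ⟨F, hF⟩ := (isCompact_sphere x₀ ε).exists_finset_convexOn_lower_bound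
    (fun x _ => hZ.continuousAt) hη
  refine ⟨insert x₀ F, _, hη, fun f hf hfZ x hx => ?_⟩
  by_contra! hεx
  have hdist : 0 < dist x x₀ := hε.trans_lt hεx
  set u := AffineMap.lineMap x₀ x (ε / dist x x₀)
  have hu : u ∈ sphere x₀ ε := by
    rw [mem_sphere, dist_lineMap_left, Real.norm_eq_abs, abs_of_nonneg (by positivity),
      dist_comm x₀, div_mul_cancel₀ _ hdist.ne']
  have hfu : f u ≤ f x₀ :=
    (hf.le_on_segment (mem_univ _) (mem_univ _) (lineMap_mem_segment ℝ x₀ x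
      ⟨by positivity, (div_le_one hdist).mpr hεx.le⟩)).trans (max_le le_rfl hx)
  have hlower := hF f hf (fun p hp => hfZ p (Finset.mem_insert_of_mem hp)) u hu
  have hx₀ := abs_le.mp (hfZ x₀ (Finset.mem_insert_self _ _))
  linarith [ha u hu]

end ConvexApproximation

theorem MeasureTheory.tendsto_measure_zero_of_subset_biUnion {α ι Ω : Type*}
    [MeasurableSpace Ω] {μ : Measure Ω} {l : Filter α} (F : Finset ι) {A : α → Set Ω}
    {B : α → ι → Set Ω} (hB : ∀ i ∈ F, Tendsto (fun n => μ (B n i)) l (𝓝 0))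
    (hA : ∀ n, A n ⊆ ⋃ i ∈ F, B n i) : Tendsto (fun n => μ (A n)) l (𝓝 0) :=
  tendsto_of_tendsto_of_tendsto_of_le_of_le tendsto_const_nhds
    (by simpa using tendsto_finsetSum F hB) (fun _ => zero_le)
    (fun n => (measure_mono (hA n)).trans (measure_biUnion_finset_le F _))

theorem argmin_of_convex_converges_general
    {Ω : Type*} [MeasurableSpace Ω]
    (μ : Measure Ω)
    {d : ℕ}
    (Zn : ℕ → Ω → (Fin d → ℝ) → ℝ)
    (hZconv : ∀ n ω, ConvexOn ℝ Set.univ (Zn n ω))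
    (Z : (Fin d → ℝ) → ℝ)
    (hZ : StrictConvexOn ℝ Set.univ Z)
    (zstar : Fin d → ℝ)
    (hzuniq : ∀ z, z ≠ zstar → Z zstar < Z z)
    (hptwise : ∀ (z : Fin d → ℝ), ∀ ε > (0 : ℝ),
      Tendsto (fun n => μ {ω | ε < |Zn n ω z - Z z|}) atTop (𝓝 0))
    (zhat : ℕ → Ω → (Fin d → ℝ))
    (hzhat_min : ∀ n ω z, Zn n ω (zhat n ω) ≤ Zn n ω z) :
    ∀ ε > (0 : ℝ),
      Tendsto (fun n => μ {ω | ε < dist (zhat n ω) zstar}) atTop (𝓝 0) := by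
  intro ε hε
  have hZcont : Continuous Z := continuousOn_univ.mp (hZ.convexOn.continuousOn isOpen_univ)
  obtain ⟨F, η, hη, hlocal⟩ := exists_finset_convexOn_dist_le_of_le hZcont hε.le
    fun u hu => hzuniq u (ne_of_mem_sphere hu hε.ne')
  refine tendsto_measure_zero_of_subset_biUnion F (fun p _ => hptwise p η hη) fun n ω hω => ?_
  by_contra hclose
  simp only [mem_iUnion, mem_ofPred_eq, not_exists, not_lt] at hclose
  exact (not_le.mpr hω) (hlocal (Zn n ω) (hZconv n ω) hclose _ (hzhat_min n ω zstar))

/-- Convexity lemma: if random convex functions `Zₙ` converge pointwise in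
probability to a deterministic strictly convex function `Z` with unique
minimizer `z*`, then any measurable selections of minimizers of `Zₙ`
converge in probability to `z*`. -/
theorem argmin_of_convex_converges
    {Ω : Type*} [MeasurableSpace Ω]
    (μ : Measure Ω) [IsProbabilityMeasure μ]
    {d : ℕ}
    (Zn : ℕ → Ω → (Fin d → ℝ) → ℝ)
    (hZconv : ∀ n ω, ConvexOn ℝ Set.univ (Zn n ω))
    (Z : (Fin d → ℝ) → ℝ)
    (hZ : StrictConvexOn ℝ Set.univ Z)
    (zstar : Fin d → ℝ)
    (hzstar : ∀ z, Z zstar ≤ Z z)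
    (hzuniq : ∀ z, z ≠ zstar → Z zstar < Z z)
    (hptwise : ∀ (z : Fin d → ℝ), ∀ ε > (0 : ℝ),
      Tendsto (fun n => μ {ω | ε < |Zn n ω z - Z z|}) atTop (𝓝 0))
    (zhat : ℕ → Ω → (Fin d → ℝ))
    (hzhat_meas : ∀ n, Measurable (zhat n))
    (hzhat_min : ∀ n ω z, Zn n ω (zhat n ω) ≤ Zn n ω z) :
    ∀ ε > (0 : ℝ),
      Tendsto (fun n => μ {ω | ε < dist (zhat n ω) zstar}) atTop (𝓝 0) :=
  argmin_of_convex_converges_general μ Zn hZconv Z hZ zstar hzuniq hptwise zhat hzhat_min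
end
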